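/- In the second adversarial example structure: if three agents a₁, a₂, a₃ occupy the vertices v₁, v₂, v₃ of a triangle at turn i and are each scheduled to rotate (a₁ → v₃, a₂ → v₁, a₃ → v₂ in one turn), then if any single agent delays at turn i, all three agents must delay at turn i in any feasible continuation (the rotation cannot proceed partially). -/

import Mathlib

/-!
A delaying agent keeps its vertex occupied, so by injectivity of the next configuration the agent
scheduled to enter that vertex must delay as well; following the rotation around the triangle, the
delay reaches all three agents.
-/

theorem stays_of_occupant_stays {A V : Type*} {s s' : A → V} (hinj : Function.Injective s')
    {a b : A} (hab : a ≠ b) (hb : s' b = s a ∨ s' b = s b) (ha : s' a = s a) : s' b = s b :=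
  hb.resolve_left fun h => hab (hinj (ha.trans h.symm))

theorem stmt_17_general {V A : Type*} (s : ℕ → A → V)
    (v₁ v₂ v₃ : V)
    (a₁ a₂ a₃ : A) (h12a : a₁ ≠ a₂) (h23a : a₂ ≠ a₃) (h13a : a₁ ≠ a₃)
    (i : ℕ)
    (hpos : s i a₁ = v₁ ∧ s i a₂ = v₂ ∧ s i a₃ = v₃)
    (hinj : Function.Injective (s (i + 1)))
    (hnext₁ : s (i + 1) a₁ = v₃ ∨ s (i + 1) a₁ = s i a₁)
    (hnext₂ : s (i + 1) a₂ = v₁ ∨ s (i + 1) a₂ = s i a₂)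
    (hnext₃ : s (i + 1) a₃ = v₂ ∨ s (i + 1) a₃ = s i a₃) :
    (s (i + 1) a₁ = s i a₁ ∨ s (i + 1) a₂ = s i a₂ ∨ s (i + 1) a₃ = s i a₃) →
      (s (i + 1) a₁ = s i a₁ ∧ s (i + 1) a₂ = s i a₂ ∧ s (i + 1) a₃ = s i a₃) := by
  obtain ⟨rfl, rfl, rfl⟩ := hpos
  have h₁₂ := stays_of_occupant_stays hinj h12a hnext₂
  have h₂₃ := stays_of_occupant_stays hinj h23a hnext₃
  have h₃₁ := stays_of_occupant_stays hinj h13a.symm hnext₁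
  rintro (h₁ | h₂ | h₃)
  · exact ⟨h₁, h₁₂ h₁, h₂₃ (h₁₂ h₁)⟩
  · exact ⟨h₃₁ (h₂₃ h₂), h₂, h₂₃ h₂⟩
  · exact ⟨h₃₁ h₃, h₁₂ (h₃₁ h₃), h₃⟩

/-- If three agents a₁, a₂, a₃ occupy the vertices v₁, v₂, v₃ of a triangle at
turn i and are each scheduled to rotate (a₁ → v₃, a₂ → v₁, a₃ → v₂), each agent at turn i+1
either moving to its intended vertex or delaying (staying put), then if any single agent delays
at turn i, all three must delay (the rotation cannot proceed partially). -/
theorem stmt_17 {V A : Type*} (G : SimpleGraph V) (s : ℕ → A → V)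
    (v₁ v₂ v₃ : V) (h12 : G.Adj v₁ v₂) (h23 : G.Adj v₂ v₃) (h13 : G.Adj v₁ v₃)
    (a₁ a₂ a₃ : A) (h12a : a₁ ≠ a₂) (h23a : a₂ ≠ a₃) (h13a : a₁ ≠ a₃)
    (i : ℕ)
    (hpos : s i a₁ = v₁ ∧ s i a₂ = v₂ ∧ s i a₃ = v₃)
    (hinj : Function.Injective (s (i + 1)))
    (hnoswap : ∀ a b : A, a ≠ b →
      ¬(s (i + 1) a = s i b ∧ s (i + 1) b = s i a ∧ s i a ≠ s i b))
    (hnext₁ : s (i + 1) a₁ = v₃ ∨ s (i + 1) a₁ = s i a₁)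
    (hnext₂ : s (i + 1) a₂ = v₁ ∨ s (i + 1) a₂ = s i a₂)
    (hnext₃ : s (i + 1) a₃ = v₂ ∨ s (i + 1) a₃ = s i a₃) :
    (s (i + 1) a₁ = s i a₁ ∨ s (i + 1) a₂ = s i a₂ ∨ s (i + 1) a₃ = s i a₃) →
      (s (i + 1) a₁ = s i a₁ ∧ s (i + 1) a₂ = s i a₂ ∧ s (i + 1) a₃ = s i a₃) :=
  stmt_17_general s v₁ v₂ v₃ a₁ a₂ a₃ h12a h23a h13a i hpos hinj hnext₁ hnext₂ hnext₃
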